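/- Let Φ : ℝ^d → ℝ ∪ {+∞} be convex, B a matrix, and (x*, y*) a saddle point of L(x, y) = Φ(x) + ⟨y, Bx⟩ with Bx* = 0. Suppose X ∈ ℝ^d satisfies Φ(X) − Φ(x*) + ρ‖BX‖ ≤ ε for some ρ ≥ max{1 + ‖y*‖, 2‖y*‖} and ε ≥ 0. Then ‖BX‖ ≤ ε and |Φ(X) − Φ(x*)| ≤ ε. -/
import Mathlib

open scoped Matrix

theorem stmt18 {d p : ℕ} (Φ : (Fin d → ℝ) → EReal)
    (hconv : ∀ x y : Fin d → ℝ, ∀ a b : ℝ, 0 ≤ a → 0 ≤ b → a + b = 1 →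
      Φ (a • x + b • y) ≤ (a : EReal) * Φ x + (b : EReal) * Φ y)
    (hnbot : ∀ x, Φ x ≠ ⊥) (hproper : ∃ x, Φ x ≠ ⊤)
    (B : Matrix (Fin p) (Fin d) ℝ) (xs : Fin d → ℝ) (ys : Fin p → ℝ)
    (hsaddle1 : ∀ y : Fin p → ℝ,
      Φ xs + ((y ⬝ᵥ (B *ᵥ xs) : ℝ) : EReal) ≤ Φ xs + ((ys ⬝ᵥ (B *ᵥ xs) : ℝ) : EReal))
    (hsaddle2 : ∀ x : Fin d → ℝ,
      Φ xs + ((ys ⬝ᵥ (B *ᵥ xs) : ℝ) : EReal) ≤ Φ x + ((ys ⬝ᵥ (B *ᵥ x) : ℝ) : EReal))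
    (hBxs : B *ᵥ xs = 0)
    (ρ ε : ℝ) (hε : 0 ≤ ε)
    (hρ : max (1 + Real.sqrt (ys ⬝ᵥ ys)) (2 * Real.sqrt (ys ⬝ᵥ ys)) ≤ ρ)
    (X : Fin d → ℝ)
    (hX : Φ X + ((ρ * Real.sqrt ((B *ᵥ X) ⬝ᵥ (B *ᵥ X)) : ℝ) : EReal) ≤ Φ xs + (ε : EReal)) :
    Real.sqrt ((B *ᵥ X) ⬝ᵥ (B *ᵥ X)) ≤ ε ∧
      Φ X - Φ xs ≤ (ε : EReal) ∧ Φ xs - Φ X ≤ (ε : EReal) := by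
  set v := B *ᵥ X with hv
  set n := Real.sqrt (v ⬝ᵥ v) with hn
  set m := Real.sqrt (ys ⬝ᵥ ys) with hm
  have hn0 : 0 ≤ n := Real.sqrt_nonneg _
  have hm0 : 0 ≤ m := Real.sqrt_nonneg _
  have hCS : |ys ⬝ᵥ v| ≤ m * n := by
    have h1 : (ys ⬝ᵥ v) ^ 2 ≤ (ys ⬝ᵥ ys) * (v ⬝ᵥ v) := by
      have := Finset.sum_mul_sq_le_sq_mul_sq Finset.univ ys v
      simpa [dotProduct, pow_two] using this
    have hyy : (0:ℝ) ≤ ys ⬝ᵥ ys := Finset.sum_nonneg fun i _ => mul_self_nonneg (ys i)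
    have h2 := Real.sqrt_le_sqrt h1
    rwa [Real.sqrt_sq_eq_abs, Real.sqrt_mul hyy] at h2
  obtain ⟨x0, hx0⟩ := hproper
  have hzero : (ys ⬝ᵥ (B *ᵥ xs) : ℝ) = 0 := by rw [hBxs]; simp
  have hxs_le : ∀ x, Φ xs ≤ Φ x + ((ys ⬝ᵥ (B *ᵥ x) : ℝ) : EReal) := by
    intro x
    have h2 := hsaddle2 x
    rwa [hzero, EReal.coe_zero, add_zero] at h2
  have hxs_ne_top : Φ xs ≠ ⊤ := by
    have : Φ xs < ⊤ := lt_of_le_of_lt (hxs_le x0)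
      (EReal.add_lt_top hx0 (EReal.coe_ne_top _))
    exact this.ne
  have hX_ne_top : Φ X ≠ ⊤ := by
    intro h
    have : (⊤ : EReal) ≤ Φ xs + (ε : EReal) :=
      calc (⊤ : EReal) = Φ X + ((ρ * n : ℝ) : EReal) := by
            rw [h, EReal.top_add_of_ne_bot (EReal.coe_ne_bot _)]
        _ ≤ Φ xs + (ε : EReal) := hX
    exact (EReal.add_lt_top hxs_ne_top (EReal.coe_ne_top _)).not_ge this
  set a := (Φ X).toReal with ha
  set b := (Φ xs).toReal with hb
  have hXa : Φ X = (a : EReal) := (EReal.coe_toReal hX_ne_top (hnbot X)).symm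
  have hxsb : Φ xs = (b : EReal) := (EReal.coe_toReal hxs_ne_top (hnbot xs)).symm
  -- real version of hX
  have hXr : a + ρ * n ≤ b + ε := by
    rw [hXa, hxsb, ← EReal.coe_add, ← EReal.coe_add, EReal.coe_le_coe_iff] at hX
    exact hX
  have hsr : b ≤ a + ys ⬝ᵥ v := by
    have := hxs_le X
    rw [hXa, hxsb, ← hv, ← EReal.coe_add, EReal.coe_le_coe_iff] at this
    exact this
  have h1m : 1 + m ≤ ρ := le_trans (le_max_left _ _) hρ
  have h2m : 2 * m ≤ ρ := le_trans (le_max_right _ _) hρ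
  have habs := abs_le.mp hCS
  have hnε : n ≤ ε := by nlinarith [habs.1, habs.2]
  have hmnε : m * n ≤ ε := by nlinarith [habs.1, habs.2]
  refine ⟨hnε, ?_, ?_⟩
  · rw [hXa, hxsb, ← EReal.coe_sub, EReal.coe_le_coe_iff]
    nlinarith
  · rw [hXa, hxsb, ← EReal.coe_sub, EReal.coe_le_coe_iff]
    nlinarith [habs.1, habs.2]
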